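/- For every natural number d, C(d,8) = (20160/20160)·L_d(2) − (12810/13440)·L_d(3) + (6770/10080)·L_d(4) − (1960/8064)·L_d(5) + (322/6720)·L_d(6) − (28/5760)·L_d(7) + (1/5040)·L_d(8) as rational numbers (the denominators being 8·7·6·5·4·3 = 20160, 8·7·6·5·4·2! = 13440, 8·7·6·5·3! = 10080, 8·7·6·4! = 8064, 8·7·5! = 6720, 8·6! = 5760, 7! = 5040), where L_d(w) = (1/w)·Σ_{r ∣ w} μ(r)·d^{w/r} is the Witt number. -/

import Mathlib

/-! Both sides are polynomials in `d`: `C(d, 8)` is the falling factorial `d (d - 1) ⋯ (d - 7)`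
divided by `8!` (which vanishes at `d = 0, …, 7` as the binomial does), and every `w` from 2 to 8
is a prime, a power of 2 or `2 · 3`, so the Möbius sum defining `L_d(w)` has at most four nonzero
terms. The identity is then a polynomial identity over `ℚ`. -/

/-- The Witt number `L_d(w) = (1/w) * Σ_{r ∣ w} μ(r) * d^(w/r)`, as a rational number. -/
def witt (d w : ℕ) : ℚ :=
  (1 / w : ℚ) * ∑ r ∈ w.divisors, (ArithmeticFunction.moebius r : ℚ) * (d : ℚ) ^ (w / r)

open ArithmeticFunction Polynomial

theorem witt_prime {p : ℕ} (hp : p.Prime) (d : ℕ) : witt d p = ((d : ℚ) ^ p - d) / p := by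
  rw [witt, hp.divisors, Finset.sum_pair hp.one_lt.ne, moebius_apply_prime hp, Nat.div_self hp.pos]
  simp only [moebius_apply_one, Nat.div_one, pow_one]
  push_cast
  ring

theorem witt_prime_pow_succ {p : ℕ} (hp : p.Prime) (d k : ℕ) :
    witt d (p ^ (k + 1)) = ((d : ℚ) ^ p ^ (k + 1) - d ^ p ^ k) / p ^ (k + 1) := by
  rw [witt, Nat.sum_divisors_prime_pow hp, Finset.sum_range_succ', Finset.sum_range_succ']
  have hvanish : ∑ i ∈ Finset.range k,
      (moebius (p ^ (i + 1 + 1)) : ℚ) * (d : ℚ) ^ (p ^ (k + 1) / p ^ (i + 1 + 1)) = 0 :=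
    Finset.sum_eq_zero fun i _ => by rw [moebius_apply_prime_pow hp (by omega)]; simp
  rw [hvanish, zero_add, pow_zero, zero_add, pow_one, moebius_apply_prime hp, Nat.div_one, pow_succ,
    Nat.mul_div_cancel _ hp.pos]
  push_cast
  simp only [moebius_apply_one, Int.cast_one, one_mul, neg_one_mul]
  ring

theorem witt_prime_mul_prime {p q : ℕ} (hp : p.Prime) (hq : q.Prime) (hpq : p ≠ q) (d : ℕ) :
    witt d (p * q) = ((d : ℚ) ^ (p * q) - d ^ p - d ^ q + d) / (p * q) := by
  have hcop : p.Coprime q := (Nat.coprime_primes hp hq).2 hpq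
  rw [witt, Nat.divisors_mul, Finset.mul_def, Finset.sum_image hcop.mul_injOn_divisors,
    Finset.sum_product, hp.divisors, hq.divisors, Finset.sum_pair hp.one_lt.ne,
    Finset.sum_pair hq.one_lt.ne, Finset.sum_pair hq.one_lt.ne]
  have hμ : (moebius (p * q) : ℚ) = 1 := by
    rw [isMultiplicative_moebius.map_mul_of_coprime hcop, moebius_apply_prime hp,
      moebius_apply_prime hq]
    norm_num
  simp only [one_mul, mul_one, hμ, moebius_apply_one, moebius_apply_prime hp,
    moebius_apply_prime hq, Nat.div_one, Nat.div_self (Nat.mul_pos hp.pos hq.pos),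
    Nat.mul_div_cancel _ hq.pos, Nat.mul_div_cancel_left _ hp.pos]
  push_cast
  ring

/-- C(d,8) = (20160/20160)·L_d(2) − (12810/13440)·L_d(3) + (6770/10080)·L_d(4) − (1960/8064)·L_d(5)
+ (322/6720)·L_d(6) − (28/5760)·L_d(7) + (1/5040)·L_d(8). -/
theorem choose_eight_eq (d : ℕ) :
    (d.choose 8 : ℚ) =
      (20160 / 20160) * witt d 2 - (12810 / 13440) * witt d 3 + (6770 / 10080) * witt d 4
        - (1960 / 8064) * witt d 5 + (322 / 6720) * witt d 6 - (28 / 5760) * witt d 7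
        + (1 / 5040) * witt d 8 := by
  have h4 : witt d 4 = ((d : ℚ) ^ 4 - d ^ 2) / 2 ^ 2 := by
    simpa using witt_prime_pow_succ Nat.prime_two d 1
  have h6 : witt d 6 = ((d : ℚ) ^ 6 - d ^ 2 - d ^ 3 + d) / (2 * 3) := by
    simpa using witt_prime_mul_prime Nat.prime_two Nat.prime_three (by norm_num) d
  have h8 : witt d 8 = ((d : ℚ) ^ 8 - d ^ 4) / 2 ^ 3 := by
    simpa using witt_prime_pow_succ Nat.prime_two d 2
  rw [Nat.cast_choose_eq_descPochhammer_div, witt_prime Nat.prime_two,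
    witt_prime Nat.prime_three, witt_prime Nat.prime_five, witt_prime (by norm_num : Nat.Prime 7),
    h4, h6, h8]
  simp only [descPochhammer_succ_eval, descPochhammer_zero, eval_one, Nat.factorial]
  push_cast
  ring
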